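/- Let Ω ⊂ ℝ^{n+1} be δ-Reifenberg flat with δ sufficiently small (depending only on dimension). Then the surface measure σ of ∂Ω satisfies the lower Ahlfors bound: for every (Q,τ) ∈ ∂Ω and R > 0, σ(C_R(Q,τ) ∩ ∂Ω) ≥ (R/2)^{n+1}. -/

import Mathlib

open MeasureTheory Real Set Filter Topology
open scoped ENNReal NNReal BigOperators

noncomputable section

abbrev Pt (n : ℕ) := EuclideanSpace ℝ (Fin n) × ℝ

/-- Real inner product on `ℝ^n`. -/
def ip {n : ℕ} (x y : EuclideanSpace ℝ (Fin n)) : ℝ := inner ℝ x y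

/-- The parabolic cylinder of radius `R` centered at `c`. -/
def pcyl {n : ℕ} (c : Pt n) (R : ℝ) : Set (Pt n) :=
  {p | dist p.1 c.1 < R ∧ |p.2 - c.2| < R ^ 2}

/-- `Ω` is `δ`-Reifenberg flat in the parabolic sense. -/
def ReifenbergFlat {n : ℕ} (Ω : Set (Pt n)) (δ : ℝ) : Prop :=
  ∀ Q ∈ frontier Ω, ∀ R : ℝ, 0 < R →
    ∃ ν : EuclideanSpace ℝ (Fin n), ‖ν‖ = 1 ∧
      (∀ p ∈ pcyl Q R, δ * R < ip (p.1 - Q.1) ν → p ∈ Ω) ∧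
      (∀ p ∈ pcyl Q R, ip (p.1 - Q.1) ν < -(δ * R) → p ∉ closure Ω)

/-- The (unnormalized) parabolic surface measure: integrate the `(n-1)`-dimensional
Hausdorff measure of the time slices. -/
def sliceMeasure (n : ℕ) (F : Set (Pt n)) : ℝ≥0∞ :=
  ∫⁻ t : ℝ, μH[(n : ℝ) - 1] {X : EuclideanSpace ℝ (Fin n) | (X, t) ∈ F}

/-!
Let `r = R / 2` and let `ν` be the unit normal of the approximating plane at `(Q, τ)` and scale `R`.
In each time slice with `|t - τ| < r²`, the normal line through a point of the flat disk of
radius `r` runs from outside `closure Ω` (at height `-r`) into `Ω` (at height `r`), since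
`δ R < r`; so it meets `∂Ω` inside `C_R(Q, τ)`. Hence the orthogonal projection onto the plane,
which is `1`-Lipschitz, maps the slice of `C_R(Q, τ) ∩ ∂Ω` onto a superset of that disk, of
measure `r^(n-1)` times the unit disk's. Integrating over the `2 r²` admissible times and using
the normalization `2 κ μH(unit disk) = 1` gives `σ(C_R(Q, τ) ∩ ∂Ω) ≥ r^(n+1)`.
-/

open Metric
open scoped Pointwise

lemma exists_mem_Icc_mem_frontier {X : Type*} [TopologicalSpace X] {Ω : Set X} {g : ℝ → X}
    (hg : Continuous g) {a b : ℝ} (hab : a ≤ b) (ha : g a ∉ Ω) (hb : g b ∈ Ω) :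
    ∃ s ∈ Icc a b, g s ∈ frontier Ω := by
  have := Subtype.preconnectedSpace (isPreconnected_Icc (a := a) (b := b))
  have hgc : Continuous fun s : Icc a b => g s := hg.comp continuous_subtype_val
  obtain ⟨s, hs⟩ := (nonempty_frontier_iff (s := {s : Icc a b | g s ∈ Ω})).2
    ⟨⟨⟨b, right_mem_Icc.2 hab⟩, hb⟩, (ne_univ_iff_exists_notMem _).2 ⟨⟨a, left_mem_Icc.2 hab⟩, ha⟩⟩
  exact ⟨s, s.2, hgc.frontier_preimage_subset Ω hs⟩

section InnerProductSpace

variable {E : Type*} [NormedAddCommGroup E] [InnerProductSpace ℝ E]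

lemma norm_sub_inner_smul_le {ν : E} (hν : ‖ν‖ = 1) (v : E) : ‖v - inner ℝ v ν • ν‖ ≤ ‖v‖ := by
  have h : ‖v - inner ℝ v ν • ν‖ ^ 2 = ‖v‖ ^ 2 - inner ℝ v ν ^ 2 := by
    rw [norm_sub_sq_real, real_inner_smul_right, norm_smul, hν, real_inner_comm,
      Real.norm_eq_abs, mul_one, sq_abs]
    ring
  nlinarith [norm_nonneg (v - inner ℝ v ν • ν), norm_nonneg v, sq_nonneg (inner ℝ v ν)]

lemma lipschitzWith_one_sub_inner_smul {ν : E} (hν : ‖ν‖ = 1) (q : E) :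
    LipschitzWith 1 fun X : E => X - inner ℝ (X - q) ν • ν := by
  refine LipschitzWith.of_dist_le_mul fun X Y => ?_
  have h : X - inner ℝ (X - q) ν • ν - (Y - inner ℝ (Y - q) ν • ν)
      = (X - Y) - inner ℝ (X - Y) ν • ν := by
    have : inner ℝ (X - q) ν - inner ℝ (Y - q) ν = inner ℝ (X - Y) ν := by
      simp only [inner_sub_left]; ring
    rw [← this]
    module
  rw [NNReal.coe_one, one_mul, dist_eq_norm, dist_eq_norm, h]
  exact norm_sub_inner_smul_le hν _

lemma ball_inter_hyperplane_eq (ν q : E) {r : ℝ} (hr : 0 < r) :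
    ball q r ∩ {X | inner ℝ (X - q) ν = 0} = q +ᵥ r • (ball 0 1 ∩ {X | inner ℝ X ν = 0}) := by
  ext X
  simp only [mem_inter_iff, mem_vadd_set_iff_neg_vadd_mem, mem_smul_set_iff_inv_smul_mem₀ hr.ne',
    mem_ball, mem_ofPred_eq, vadd_eq_add, neg_add_eq_sub, dist_eq_norm, sub_zero, norm_smul,
    norm_inv, Real.norm_of_nonneg hr.le, inv_mul_lt_iff₀ hr, mul_one, real_inner_smul_left,
    mul_eq_zero, inv_eq_zero, hr.ne', false_or]

lemma hausdorffMeasure_ball_inter_hyperplane [MeasurableSpace E] [BorelSpace E] (ν q : E)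
    {r : ℝ} (hr : 0 < r) {d : ℝ} (hd : 0 ≤ d) :
    μH[d] (ball q r ∩ {X | inner ℝ (X - q) ν = 0})
      = ENNReal.ofReal r ^ d * μH[d] (ball 0 1 ∩ {X | inner ℝ X ν = 0}) := by
  rw [ball_inter_hyperplane_eq ν q hr, hausdorffMeasure_vadd _ (Or.inl hd),
    Measure.hausdorffMeasure_smul₀ hd hr.ne', ENNReal.smul_def, smul_eq_mul,
    ENNReal.coe_rpow_of_nonneg _ hd, ← enorm_eq_nnnorm, Real.enorm_eq_ofReal hr.le]

end InnerProductSpace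

section Slices

variable {n : ℕ}

lemma sliceMeasure_mono {F G : Set (Pt n)} (h : F ⊆ G) : sliceMeasure n F ≤ sliceMeasure n G :=
  lintegral_mono fun _ => measure_mono fun _ hX => h hX

lemma sliceMeasure_image_prodMap_le (hn : 1 ≤ n)
    {f : EuclideanSpace ℝ (Fin n) → EuclideanSpace ℝ (Fin n)} (hf : LipschitzWith 1 f)
    (F : Set (Pt n)) : sliceMeasure n (Prod.map f id '' F) ≤ sliceMeasure n F := by
  have hd : (0 : ℝ) ≤ n - 1 := by
    rw [sub_nonneg]
    exact_mod_cast hn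
  refine lintegral_mono fun t => ?_
  calc μH[(n : ℝ) - 1] {X | (X, t) ∈ Prod.map f id '' F}
      ≤ μH[(n : ℝ) - 1] (f '' {X | (X, t) ∈ F}) := by
        refine measure_mono ?_
        rintro _ ⟨⟨X, s⟩, hXs, heq⟩
        obtain ⟨rfl, rfl⟩ := Prod.mk.inj heq
        exact mem_image_of_mem f hXs
    _ ≤ μH[(n : ℝ) - 1] {X | (X, t) ∈ F} := by
        simpa only [ENNReal.coe_one, ENNReal.one_rpow, one_mul]
          using hf.hausdorffMeasure_image_le hd _

lemma sliceMeasure_pcyl_inter (c : Pt n) (R : ℝ) (A : Set (EuclideanSpace ℝ (Fin n))) :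
    sliceMeasure n (pcyl c R ∩ {p | p.1 ∈ A})
      = ENNReal.ofReal (2 * R ^ 2) * μH[(n : ℝ) - 1] (ball c.1 R ∩ A) := by
  have hslice : (fun t => μH[(n : ℝ) - 1] {X | (X, t) ∈ pcyl c R ∩ {p | p.1 ∈ A}})
      = (Ioo (c.2 - R ^ 2) (c.2 + R ^ 2)).indicator fun _ => μH[(n : ℝ) - 1] (ball c.1 R ∩ A) := by
    funext t
    by_cases ht : t ∈ Ioo (c.2 - R ^ 2) (c.2 + R ^ 2)
    · rw [indicator_of_mem ht]
      have ht' : |t - c.2| < R ^ 2 := by rw [abs_sub_lt_iff]; constructor <;> linarith [ht.1, ht.2]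
      congr 1
      ext X
      simp [pcyl, ht']
    · rw [indicator_of_notMem ht]
      have ht' : ¬ |t - c.2| < R ^ 2 := by
        rw [abs_sub_lt_iff]; exact fun h => ht ⟨by linarith [h.2], by linarith [h.1]⟩
      convert measure_empty (μ := μH[(n : ℝ) - 1])
      ext X
      simp [pcyl, ht']
  rw [sliceMeasure, hslice, lintegral_indicator measurableSet_Ioo, setLIntegral_const,
    Real.volume_Ioo, mul_comm]
  congr 2
  ring

end Slices

section Reifenberg

variable {n : ℕ}

lemma ip_add_smul_sub {ν Y q : EuclideanSpace ℝ (Fin n)} (hν : ‖ν‖ = 1) (hY : ip (Y - q) ν = 0)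
    (s : ℝ) : ip (Y + s • ν - q) ν = s := by
  rw [ip, add_sub_right_comm, inner_add_left, real_inner_smul_left, real_inner_self_eq_norm_sq,
    hν, ← ip, hY]
  ring

lemma add_smul_mem_pcyl {Q : Pt n} {R : ℝ} {ν Y : EuclideanSpace ℝ (Fin n)} {t s : ℝ}
    (hν : ‖ν‖ = 1) (hYt : (Y, t) ∈ pcyl Q (R / 2)) (hs : |s| ≤ R / 2) :
    (Y + s • ν, t) ∈ pcyl Q R := by
  obtain ⟨hY, ht⟩ := hYt
  refine ⟨?_, ht.trans_le (by nlinarith)⟩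
  calc dist (Y + s • ν) Q.1 ≤ ‖s • ν‖ + dist Y Q.1 := by
        rw [← dist_self_add_left (s • ν) Y]
        exact dist_triangle _ _ _
    _ < R / 2 + R / 2 := by
        rw [norm_smul, hν, mul_one, Real.norm_eq_abs]
        exact add_lt_add_of_le_of_lt hs hY
    _ = R := add_halves R

lemma pcyl_half_inter_hyperplane_subset_image {Ω : Set (Pt n)} {Q : Pt n} {R δ : ℝ}
    {ν : EuclideanSpace ℝ (Fin n)} (hν : ‖ν‖ = 1) (hR : 0 ≤ R) (hδR : δ * R < R / 2)
    (hin : ∀ p ∈ pcyl Q R, δ * R < ip (p.1 - Q.1) ν → p ∈ Ω)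
    (hout : ∀ p ∈ pcyl Q R, ip (p.1 - Q.1) ν < -(δ * R) → p ∉ closure Ω) :
    pcyl Q (R / 2) ∩ {p | p.1 ∈ {X | ip (X - Q.1) ν = 0}}
      ⊆ Prod.map (fun X => X - ip (X - Q.1) ν • ν) id '' (pcyl Q R ∩ frontier Ω) := by
  rintro ⟨Y, t⟩ ⟨hYt, hY⟩
  have hline : ∀ s, |s| ≤ R / 2 → (Y + s • ν, t) ∈ pcyl Q R := fun s hs =>
    add_smul_mem_pcyl hν hYt hs
  have hR2 : |R / 2| ≤ R / 2 := (abs_of_nonneg (by linarith)).le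
  have hplus : (Y + (R / 2) • ν, t) ∈ Ω :=
    hin _ (hline _ hR2) (by rw [ip_add_smul_sub hν hY]; exact hδR)
  have hminus : (Y + (-(R / 2)) • ν, t) ∉ Ω := fun h =>
    hout _ (hline _ (by rwa [abs_neg])) (by rw [ip_add_smul_sub hν hY]; linarith)
      (subset_closure h)
  obtain ⟨s, hs, hfr⟩ := exists_mem_Icc_mem_frontier (Ω := Ω)
    (g := fun s : ℝ => (Y + s • ν, t)) (by fun_prop) (by linarith) hminus hplus
  refine ⟨(Y + s • ν, t), ⟨hline s (abs_le.2 hs), hfr⟩, ?_⟩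
  simp only [Prod.map, id, ip_add_smul_sub hν hY, add_sub_cancel_right]

lemma one_le_of_norm_eq_one {ν : EuclideanSpace ℝ (Fin n)} (hν : ‖ν‖ = 1) : 1 ≤ n :=
  Nat.one_le_iff_ne_zero.2 fun hn => by
    subst hn
    simp [Subsingleton.elim ν 0] at hν

lemma ofReal_mul_sliceMeasure_pcyl_inter_hyperplane {κ : ℝ} {ν : EuclideanSpace ℝ (Fin n)}
    (hν : ‖ν‖ = 1)
    (hκ : ENNReal.ofReal κ * sliceMeasure n (pcyl (0 : Pt n) 1 ∩ {p : Pt n | ip p.1 ν = 0}) = 1)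
    (Q : Pt n) {r : ℝ} (hr : 0 < r) :
    ENNReal.ofReal κ * sliceMeasure n (pcyl Q r ∩ {p | p.1 ∈ {X | ip (X - Q.1) ν = 0}})
      = ENNReal.ofReal (r ^ (n + 1)) := by
  have hd : (0 : ℝ) ≤ n - 1 := by
    rw [sub_nonneg]
    exact_mod_cast one_le_of_norm_eq_one hν
  have hpow : ENNReal.ofReal (r ^ (n + 1))
      = ENNReal.ofReal (r ^ 2) * ENNReal.ofReal r ^ ((n : ℝ) - 1) := by
    rw [ENNReal.ofReal_rpow_of_pos hr, ← ENNReal.ofReal_mul (by positivity), ← Real.rpow_natCast,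
      ← Real.rpow_natCast r 2, ← Real.rpow_add hr]
    push_cast
    ring_nf
  rw [show pcyl (0 : Pt n) 1 ∩ {p : Pt n | ip p.1 ν = 0}
      = pcyl 0 1 ∩ {p | p.1 ∈ {X | ip X ν = 0}} from rfl, sliceMeasure_pcyl_inter] at hκ
  simp only [ip, Prod.fst_zero] at hκ ⊢
  rw [sliceMeasure_pcyl_inter, hausdorffMeasure_ball_inter_hyperplane ν Q.1 hr hd, hpow]
  calc _ = ENNReal.ofReal (r ^ 2) * ENNReal.ofReal r ^ ((n : ℝ) - 1)
          * (ENNReal.ofReal κ * (ENNReal.ofReal (2 * 1 ^ 2)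
            * μH[(n : ℝ) - 1] (ball 0 1 ∩ {X | inner ℝ X ν = 0}))) := by
        rw [ENNReal.ofReal_mul zero_le_two, ENNReal.ofReal_mul zero_le_two]
        norm_num
        ring
    _ = _ := by rw [hκ, mul_one]

end Reifenberg

/-- if `Ω` is `δ`-Reifenberg flat with `δ` small (depending only on `n`),
then the parabolic surface measure `σ = κ · sliceMeasure` (normalized so that
`σ(C_1(0,0) ∩ V) = 1` for every `n`-plane `V` through the origin containing the time
direction) satisfies the lower Ahlfors bound `σ(C_R(Q,τ) ∩ ∂Ω) ≥ (R/2)^{n+1}`. -/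
theorem statement2 (n : ℕ) :
    ∃ δ₀ : ℝ, 0 < δ₀ ∧
      ∀ (Ω : Set (Pt n)) (δ κ : ℝ), 0 < δ → δ < δ₀ → 0 < κ →
        (∀ ν : EuclideanSpace ℝ (Fin n), ‖ν‖ = 1 →
          ENNReal.ofReal κ *
              sliceMeasure n (pcyl (0 : Pt n) 1 ∩ {p : Pt n | ip p.1 ν = 0}) = 1) →
        ReifenbergFlat Ω δ →
        ∀ Q ∈ frontier Ω, ∀ R : ℝ, 0 < R →
          ENNReal.ofReal ((R / 2) ^ (n + 1)) ≤
            ENNReal.ofReal κ * sliceMeasure n (pcyl Q R ∩ frontier Ω) := by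
  refine ⟨1 / 2, one_half_pos, fun Ω δ κ _ hδ _ hκ hΩ Q hQ R hR => ?_⟩
  obtain ⟨ν, hν, hin, hout⟩ := hΩ Q hQ R hR
  have hn := one_le_of_norm_eq_one hν
  calc ENNReal.ofReal ((R / 2) ^ (n + 1))
      = ENNReal.ofReal κ * sliceMeasure n (pcyl Q (R / 2) ∩ {p | p.1 ∈ {X | ip (X - Q.1) ν = 0}}) :=
        (ofReal_mul_sliceMeasure_pcyl_inter_hyperplane hν (hκ ν hν) Q (by positivity)).symm
    _ ≤ ENNReal.ofReal κ * sliceMeasure n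
          (Prod.map (fun X => X - ip (X - Q.1) ν • ν) id '' (pcyl Q R ∩ frontier Ω)) := by
        gcongr
        exact sliceMeasure_mono
          (pcyl_half_inter_hyperplane_subset_image hν hR.le (by nlinarith) hin hout)
    _ ≤ ENNReal.ofReal κ * sliceMeasure n (pcyl Q R ∩ frontier Ω) := by
        gcongr
        exact sliceMeasure_image_prodMap_le hn (lipschitzWith_one_sub_inner_smul hν Q.1) _
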